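/- Let n, K, n_K be positive integers with n = K·n_K and K ≥ 2. Let e_1, …, e_n be square-integrable real random variables on a probability space, with fold map 𝒦(i) = k whenever n_K(k−1) < i ≤ n_K·k, and assume there exist real numbers μ, σ², ω, γ such that E[e_i] = μ and Var(e_i) = σ² for every i; Cov(e_i, e_j) = ω for every i ≠ j with 𝒦(i) = 𝒦(j); and Cov(e_i, e_j) = γ whenever 𝒦(i) ≠ 𝒦(j). Let Err = (1/n)·Σ_{i=1}^n e_i, err_k = (1/n_K)·Σ_{i : 𝒦(i)=k} e_i, and V̂ = (1/K)·(1/(K−1))·Σ_{k=1}^K (err_k − (1/K)·Σ_{k'} err_{k'})². Then the bias of V̂ as an estimator of Var(Err) equals −γ; that is, E[V̂] − Var(Err) = −γ. -/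

import Mathlib

open MeasureTheory ProbabilityTheory Finset

/-!
The fold means `err_k` have common mean `μ` and pairwise covariance `γ`, since each covariance
`Cov(err_k, err_l)` is an average of `n_K²` covariances of errors lying in different folds; and
`Err` is the average of the `err_k`. For any `K ≥ 2` square-integrable variables `X_k` with common
mean `m` and common pairwise covariance `c`, the identity
`∑ (X_k - X̄)² = ∑ (X_k - m)² - K (X̄ - m)²` gives `E ∑ (X_k - X̄)² = ∑ Var X_k - K Var X̄`, while
`Var X̄ = (∑ Var X_k + K (K - 1) c) / K²`. The individual variances cancel in
`E V̂ - Var X̄`, leaving `-c`.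
-/

lemma sum_sq_sub_average {ι : Type*} (s : Finset ι) (y : ι → ℝ) (m : ℝ) (hs : s.Nonempty) :
    ∑ k ∈ s, (y k - 1 / (#s : ℝ) * ∑ l ∈ s, y l) ^ 2
      = ∑ k ∈ s, (y k - m) ^ 2 - #s * (1 / (#s : ℝ) * ∑ l ∈ s, y l - m) ^ 2 := by
  have : (#s : ℝ) ≠ 0 := by positivity
  simp only [sub_sq, sum_add_distrib, sum_sub_distrib, ← sum_mul, ← mul_sum, sum_const,
    nsmul_eq_mul]
  field_simp
  ring

section NaiveVariance

variable {Ω ι : Type*} [MeasurableSpace Ω] {P : Measure Ω}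

lemma variance_fun_sum_of_covariance_eq [IsFiniteMeasure P] (s : Finset ι) {X : ι → Ω → ℝ}
    (hX : ∀ k ∈ s, MemLp (X k) 2 P) {c : ℝ}
    (hc : ∀ k ∈ s, ∀ l ∈ s, k ≠ l → cov[X k, X l; P] = c) :
    Var[fun x ↦ ∑ k ∈ s, X k x; P] = ∑ k ∈ s, Var[X k; P] + #s * (#s - 1) * c := by
  classical
  rw [← covariance_self (memLp_finsetSum s hX).aestronglyMeasurable.aemeasurable,
    covariance_fun_sum_fun_sum' hX hX]
  have row : ∀ k ∈ s, ∑ l ∈ s, cov[X k, X l; P] = Var[X k; P] + (#s - 1) * c := by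
    intro k hk
    rw [← add_sum_erase s _ hk, covariance_self (hX k hk).aestronglyMeasurable.aemeasurable,
      sum_congr rfl fun l hl ↦ hc k hk l (mem_of_mem_erase hl) (ne_of_mem_erase hl).symm,
      sum_const, card_erase_of_mem hk, nsmul_eq_mul, Nat.cast_pred (card_pos.2 ⟨k, hk⟩)]
  rw [sum_congr rfl row, sum_add_distrib, sum_const, nsmul_eq_mul, mul_assoc]

lemma variance_average_of_covariance_eq [IsFiniteMeasure P] (s : Finset ι) {X : ι → Ω → ℝ}
    (hX : ∀ k ∈ s, MemLp (X k) 2 P) {c : ℝ}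
    (hc : ∀ k ∈ s, ∀ l ∈ s, k ≠ l → cov[X k, X l; P] = c) :
    Var[fun x ↦ 1 / (#s : ℝ) * ∑ k ∈ s, X k x; P]
      = (∑ k ∈ s, Var[X k; P] + #s * (#s - 1) * c) / #s ^ 2 := by
  rw [variance_const_mul, variance_fun_sum_of_covariance_eq s hX hc]
  ring

lemma integral_average_of_integral_eq [IsProbabilityMeasure P] (s : Finset ι) (hs : s.Nonempty)
    {X : ι → Ω → ℝ} (hX : ∀ k ∈ s, Integrable (X k) P) {m : ℝ} (hm : ∀ k ∈ s, P[X k] = m) :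
    ∫ x, 1 / (#s : ℝ) * ∑ k ∈ s, X k x ∂P = m := by
  have : (#s : ℝ) ≠ 0 := by positivity
  rw [integral_const_mul, integral_finsetSum s hX, sum_congr rfl hm, sum_const, nsmul_eq_mul]
  field_simp

lemma integral_sum_sq_sub_average [IsProbabilityMeasure P] (s : Finset ι) (hs : s.Nonempty)
    {X : ι → Ω → ℝ} (hX : ∀ k ∈ s, MemLp (X k) 2 P) {m : ℝ} (hm : ∀ k ∈ s, P[X k] = m) :
    ∫ x, ∑ k ∈ s, (X k x - 1 / (#s : ℝ) * ∑ l ∈ s, X l x) ^ 2 ∂P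
      = ∑ k ∈ s, Var[X k; P] - #s * Var[fun x ↦ 1 / (#s : ℝ) * ∑ k ∈ s, X k x; P] := by
  have hmean : MemLp (fun x ↦ 1 / (#s : ℝ) * ∑ k ∈ s, X k x) 2 P :=
    (memLp_finsetSum s hX).const_mul _
  have hvar : ∀ k ∈ s, ∫ x, (X k x - m) ^ 2 ∂P = Var[X k; P] := fun k hk ↦ by
    rw [variance_eq_integral (hX k hk).aestronglyMeasurable.aemeasurable, hm k hk]
  have hvar_mean : ∫ x, (1 / (#s : ℝ) * ∑ k ∈ s, X k x - m) ^ 2 ∂P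
      = Var[fun x ↦ 1 / (#s : ℝ) * ∑ k ∈ s, X k x; P] := by
    rw [variance_eq_integral hmean.aestronglyMeasurable.aemeasurable,
      integral_average_of_integral_eq s hs (fun k hk ↦ (hX k hk).integrable one_le_two) hm]
  have hint : ∀ k ∈ s, Integrable (fun x ↦ (X k x - m) ^ 2) P :=
    fun k hk ↦ ((hX k hk).sub (memLp_const m)).integrable_sq
  have hint_mean : Integrable (fun x ↦ (1 / (#s : ℝ) * ∑ k ∈ s, X k x - m) ^ 2) P :=
    (hmean.sub (memLp_const m)).integrable_sq
  simp_rw [sum_sq_sub_average s _ m hs]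
  rw [integral_sub (integrable_finsetSum s hint) (hint_mean.const_mul _),
    integral_finsetSum s hint, integral_const_mul, sum_congr rfl hvar, hvar_mean]

theorem integral_naiveVariance_sub_variance_average [IsProbabilityMeasure P] (s : Finset ι)
    (hs : 2 ≤ #s) {X : ι → Ω → ℝ} (hX : ∀ k ∈ s, MemLp (X k) 2 P) {m c : ℝ}
    (hm : ∀ k ∈ s, P[X k] = m) (hc : ∀ k ∈ s, ∀ l ∈ s, k ≠ l → cov[X k, X l; P] = c) :
    ∫ x, 1 / (#s : ℝ) * (1 / ((#s : ℝ) - 1)) *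
        ∑ k ∈ s, (X k x - 1 / (#s : ℝ) * ∑ l ∈ s, X l x) ^ 2 ∂P
      - Var[fun x ↦ 1 / (#s : ℝ) * ∑ k ∈ s, X k x; P] = -c := by
  have hne : s.Nonempty := card_pos.1 (by omega)
  have hs' : (2 : ℝ) ≤ #s := by exact_mod_cast hs
  have h1 : (#s : ℝ) - 1 ≠ 0 := by linarith
  rw [integral_const_mul, integral_sum_sq_sub_average s hne hX hm,
    variance_average_of_covariance_eq s hX hc]
  field_simp
  ring

end NaiveVariance

lemma card_filter_div_eq {n m k : ℕ} (hm : 0 < m) (hk : (k + 1) * m ≤ n) :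
    #{i : Fin n | i.val / m = k} = m := by
  have hIco : {i ∈ range n | i / m = k} = Ico (k * m) ((k + 1) * m) := by
    ext i
    simp only [mem_filter, mem_range, mem_Ico, Nat.div_eq_iff hm]
    constructor
    · rintro ⟨-, h1, h2⟩
      exact ⟨h1, by rw [add_one_mul]; omega⟩
    · rintro ⟨h1, h2⟩
      exact ⟨by omega, h1, by rw [add_one_mul] at h2; omega⟩
  have hmap : ({i : Fin n | i.val / m = k} : Finset (Fin n)).map Fin.valEmbedding
      = {i ∈ range n | i / m = k} := by
    ext i
    simp only [mem_map, mem_filter, mem_univ, true_and, Fin.valEmbedding_apply, mem_range]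
    exact ⟨fun ⟨j, hj, hji⟩ ↦ hji ▸ ⟨j.isLt, hj⟩, fun ⟨hi, hik⟩ ↦ ⟨⟨i, hi⟩, hik, rfl⟩⟩
  rw [← card_map Fin.valEmbedding, hmap, hIco, Nat.card_Ico, add_one_mul, Nat.add_sub_cancel_left]

section Folds

variable {Ω : Type*} {n K nK : ℕ}

noncomputable def foldMean (nK : ℕ) (e : Fin n → Ω → ℝ) (k : ℕ) (x : Ω) : ℝ :=
  1 / (nK : ℝ) * ∑ i ∈ univ.filter (fun i : Fin n ↦ i.val / nK = k), e i x

lemma val_div_lt_of_eq_mul (hnK : 0 < nK) (hn : n = K * nK) (i : Fin n) : i.val / nK < K :=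
  (Nat.div_lt_iff_lt_mul hnK).2 (hn ▸ i.isLt)

lemma card_fold_eq (hnK : 0 < nK) (hn : n = K * nK) {k : ℕ} (hk : k < K) :
    #{i : Fin n | i.val / nK = k} = nK :=
  card_filter_div_eq hnK (hn ▸ Nat.mul_le_mul_right nK hk)

lemma average_foldMean (hnK : 0 < nK) (hn : n = K * nK) (e : Fin n → Ω → ℝ) (x : Ω) :
    1 / (K : ℝ) * ∑ k ∈ range K, foldMean nK e k x = 1 / (n : ℝ) * ∑ i, e i x := by
  simp only [foldMean, ← mul_sum]
  have hnR : (n : ℝ) = K * nK := by exact_mod_cast hn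
  rw [sum_fiberwise_of_maps_to fun i _ ↦ mem_range.2 (val_div_lt_of_eq_mul hnK hn i), ← mul_assoc,
    one_div_mul_one_div, hnR]

variable [MeasurableSpace Ω] {P : Measure Ω}

lemma memLp_foldMean {e : Fin n → Ω → ℝ} (he : ∀ i, MemLp (e i) 2 P) (k : ℕ) :
    MemLp (foldMean nK e k) 2 P :=
  (memLp_finsetSum _ fun i _ ↦ he i).const_mul _

lemma integral_foldMean [IsProbabilityMeasure P] (hnK : 0 < nK) (hn : n = K * nK)
    {e : Fin n → Ω → ℝ} (he : ∀ i, Integrable (e i) P) {μ : ℝ} (hmean : ∀ i, P[e i] = μ)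
    {k : ℕ} (hk : k < K) :
    P[foldMean nK e k] = μ := by
  have : (nK : ℝ) ≠ 0 := by positivity
  unfold foldMean
  rw [integral_const_mul, integral_finsetSum _ fun i _ ↦ he i,
    sum_congr rfl fun i _ ↦ hmean i, sum_const, card_fold_eq hnK hn hk, nsmul_eq_mul]
  field_simp

lemma covariance_foldMean_of_ne [IsProbabilityMeasure P] (hnK : 0 < nK) (hn : n = K * nK)
    {e : Fin n → Ω → ℝ} (he : ∀ i, MemLp (e i) 2 P) {γ : ℝ}
    (hcov : ∀ i j : Fin n, i.val / nK ≠ j.val / nK → cov[e i, e j; P] = γ)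
    {k l : ℕ} (hk : k < K) (hl : l < K) (hkl : k ≠ l) :
    cov[foldMean nK e k, foldMean nK e l; P] = γ := by
  have : (nK : ℝ) ≠ 0 := by positivity
  unfold foldMean
  rw [covariance_const_mul_left, covariance_const_mul_right,
    covariance_fun_sum_fun_sum' (fun i _ ↦ he i) (fun i _ ↦ he i)]
  rw [sum_congr rfl fun i hi ↦ sum_congr rfl fun j hj ↦ hcov i j ?_]
  · rw [sum_const, sum_const, card_fold_eq hnK hn hk, card_fold_eq hnK hn hl, nsmul_eq_mul,
      nsmul_eq_mul]
    field_simp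
  · rw [(mem_filter.1 hi).2, (mem_filter.1 hj).2]
    exact hkl

end Folds

/-- Folds are 0-indexed: `i : Fin n` lies in fold `i.val / nK`, i.e. `𝒦(i + 1) = i.val / nK + 1`. -/
theorem cvk_naive_variance_estimator_bias_general
    {Ω : Type*} [MeasurableSpace Ω] (P : Measure Ω) [IsProbabilityMeasure P]
    (n K nK : ℕ) (hK : 2 ≤ K) (hnK : 0 < nK) (hn : n = K * nK)
    (e : Fin n → Ω → ℝ) (he : ∀ i, MemLp (e i) 2 P)
    (μ γ : ℝ)
    (hmean : ∀ i, ∫ x, e i x ∂P = μ)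
    (hcov_diff : ∀ i j : Fin n, i.val / nK ≠ j.val / nK →
      ∫ x, (e i x - ∫ y, e i y ∂P) * (e j x - ∫ y, e j y ∂P) ∂P = γ)
    (err : ℕ → Ω → ℝ)
    (herr : ∀ k x, err k x =
      (1 / (nK : ℝ)) * ∑ i ∈ Finset.univ.filter (fun i : Fin n => i.val / nK = k), e i x) :
    (∫ x, (1 / (K : ℝ)) * (1 / ((K : ℝ) - 1)) *
        ∑ k ∈ Finset.range K,
          (err k x - (1 / (K : ℝ)) * ∑ k' ∈ Finset.range K, err k' x) ^ 2 ∂P)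
      - variance (fun x => (1 / (n : ℝ)) * ∑ i, e i x) P = -γ := by
  obtain rfl : err = foldMean nK e := funext fun k ↦ funext (herr k)
  have key := integral_naiveVariance_sub_variance_average (range K) (by rwa [card_range])
    (fun k _ ↦ memLp_foldMean he k)
    (fun k hk ↦ integral_foldMean hnK hn (fun i ↦ (he i).integrable one_le_two) hmean
      (mem_range.1 hk))
    (fun k hk l hl ↦ covariance_foldMean_of_ne hnK hn he hcov_diff (mem_range.1 hk)
      (mem_range.1 hl))
  rwa [card_range, funext (average_foldMean hnK hn e)] at key

/-- The bias of the naive (sample-variance based) estimator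
`V̂ = (1/K)·(1/(K-1))·∑ₖ (errₖ - mean)²` of the variance of the K-fold
cross-validation error estimator `Err = (1/n) ∑ i, e i` equals `-γ`,
where `γ` is the covariance between errors of two observations lying
in different folds.  The fold map assigns observation `i : Fin n`
(0-indexed) to fold `i.val / nK`, the 0-indexed version of
`𝒦(i) = k ↔ n_K (k-1) < i ≤ n_K k`. -/
theorem cvk_naive_variance_estimator_bias
    {Ω : Type*} [MeasurableSpace Ω] (P : Measure Ω) [IsProbabilityMeasure P]
    (n K nK : ℕ) (hK : 2 ≤ K) (hnK : 0 < nK) (hn : n = K * nK)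
    (e : Fin n → Ω → ℝ) (he : ∀ i, MemLp (e i) 2 P)
    (μ σ2 ω γ : ℝ)
    (hmean : ∀ i, ∫ x, e i x ∂P = μ)
    (hvar : ∀ i, variance (e i) P = σ2)
    (hcov_same : ∀ i j : Fin n, i ≠ j → i.val / nK = j.val / nK →
      ∫ x, (e i x - ∫ y, e i y ∂P) * (e j x - ∫ y, e j y ∂P) ∂P = ω)
    (hcov_diff : ∀ i j : Fin n, i.val / nK ≠ j.val / nK →
      ∫ x, (e i x - ∫ y, e i y ∂P) * (e j x - ∫ y, e j y ∂P) ∂P = γ)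
    (err : ℕ → Ω → ℝ)
    (herr : ∀ k x, err k x =
      (1 / (nK : ℝ)) * ∑ i ∈ Finset.univ.filter (fun i : Fin n => i.val / nK = k), e i x) :
    (∫ x, (1 / (K : ℝ)) * (1 / ((K : ℝ) - 1)) *
        ∑ k ∈ Finset.range K,
          (err k x - (1 / (K : ℝ)) * ∑ k' ∈ Finset.range K, err k' x) ^ 2 ∂P)
      - variance (fun x => (1 / (n : ℝ)) * ∑ i, e i x) P = -γ :=
  cvk_naive_variance_estimator_bias_general P n K nK hK hnK hn e he μ γ hmean hcov_diff err herr
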